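/- Replacement theorem: Let P be a nested program and let F, G be formulas that are equivalent relative to P (for every SE-model (X,Y) of P, X ⊨ F^Y iff X ⊨ G^Y). If Q' is obtained from a nested program Q by replacing some regular occurrences of F by G (occurrences that are not an atom immediately preceded by ¬), then P ∪ Q and P ∪ Q' are strongly equivalent. -/

import Mathlib

open scoped Classical

inductive Lit where
  | pos : ℕ → Lit
  | neg : ℕ → Lit
deriving DecidableEq

inductive Fml where
  | bot : Fml
  | top : Fml
  | lit : Lit → Fml
  | not : Fml → Fml
  | conj : Fml → Fml → Fml
  | disj : Fml → Fml → Fml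
deriving DecidableEq

structure Rule where
  head : Fml
  body : Fml
deriving DecidableEq

abbrev Prog := Set Rule

/-- A set of literals is consistent if it contains no complementary pair. -/
def Consistent (X : Set Lit) : Prop :=
  ∀ a : ℕ, ¬ (Lit.pos a ∈ X ∧ Lit.neg a ∈ X)

def Sat (X : Set Lit) : Fml → Prop
  | Fml.bot => False
  | Fml.top => True
  | Fml.lit l => l ∈ X
  | Fml.not F => ¬ Sat X F
  | Fml.conj F G => Sat X F ∧ Sat X G
  | Fml.disj F G => Sat X F ∨ Sat X G

def SatRule (X : Set Lit) (r : Rule) : Prop := Sat X r.body → Sat X r.head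

def SatProg (X : Set Lit) (P : Prog) : Prop := ∀ r ∈ P, SatRule X r

/-- The reduct of a formula relative to X. -/
noncomputable def Reduct (X : Set Lit) : Fml → Fml
  | Fml.bot => Fml.bot
  | Fml.top => Fml.top
  | Fml.lit l => Fml.lit l
  | Fml.not F => if Sat X F then Fml.bot else Fml.top
  | Fml.conj F G => Fml.conj (Reduct X F) (Reduct X G)
  | Fml.disj F G => Fml.disj (Reduct X F) (Reduct X G)

noncomputable def ReductRule (X : Set Lit) (r : Rule) : Rule :=
  ⟨Reduct X r.head, Reduct X r.body⟩

noncomputable def ReductProg (X : Set Lit) (P : Prog) : Prog :=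
  ReductRule X '' P

/-- Y is an answer set for P: Y is minimal among consistent sets satisfying the reduct of P w.r.t. Y. -/
def AnswerSet (Y : Set Lit) (P : Prog) : Prop :=
  Consistent Y ∧ SatProg Y (ReductProg Y P) ∧
    ∀ Z : Set Lit, Consistent Z → SatProg Z (ReductProg Y P) → Z ⊆ Y → Z = Y

def SEModel (P : Prog) (X Y : Set Lit) : Prop :=
  Consistent X ∧ Consistent Y ∧ X ⊆ Y ∧ SatProg Y P ∧ SatProg X (ReductProg Y P)

def StrongEq (P Q : Prog) : Prop :=
  ∀ R : Prog, ∀ Y : Set Lit, AnswerSet Y (P ∪ R) ↔ AnswerSet Y (Q ∪ R)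

def Fml.negFree : Fml → Prop
  | Fml.bot => True
  | Fml.top => True
  | Fml.lit l => ∃ a, l = Lit.pos a
  | Fml.not F => F.negFree
  | Fml.conj F G => F.negFree ∧ G.negFree
  | Fml.disj F G => F.negFree ∧ G.negFree

def ProgNegFree (P : Prog) : Prop := ∀ r ∈ P, r.head.negFree ∧ r.body.negFree

/-- The set of atoms (positive literals) in a set of literals. -/
def PosLits (Z : Set Lit) : Set Lit := {l ∈ Z | ∃ a, l = Lit.pos a}

def AtomsOnly (Z : Set Lit) : Prop := ∀ l ∈ Z, ∃ a, l = Lit.pos a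

/-- `Repl F G H H'` : H' is obtained from H by replacing some (regular) occurrences
of F by G.  (In this representation classical negation is part of literals, so every
formula occurrence is regular.) -/
inductive Repl (F G : Fml) : Fml → Fml → Prop
  | refl (H : Fml) : Repl F G H H
  | repl : Repl F G F G
  | not {H H' : Fml} : Repl F G H H' → Repl F G (Fml.not H) (Fml.not H')
  | conj {H₁ H₁' H₂ H₂' : Fml} :
      Repl F G H₁ H₁' → Repl F G H₂ H₂' → Repl F G (Fml.conj H₁ H₂) (Fml.conj H₁' H₂')
  | disj {H₁ H₁' H₂ H₂' : Fml} :
      Repl F G H₁ H₁' → Repl F G H₂ H₂' → Repl F G (Fml.disj H₁ H₂) (Fml.disj H₁' H₂')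

/-- Q' is obtained from Q by replacing occurrences of F by G in heads and bodies. -/
def ReplProg (F G : Fml) (Q Q' : Prog) : Prop :=
  ∃ f : Rule → Rule, Q' = f '' Q ∧
    ∀ r ∈ Q, Repl F G r.head (f r).head ∧ Repl F G r.body (f r).body

/-!
The reduct commutes with every connective except negation, and there it only depends on
satisfaction by `Y`, which the reduct preserves (`Y ⊨ H^Y ↔ Y ⊨ H`). Hence, for an SE-model
`(X, Y)` of `P`, equivalence of `F^Y` and `G^Y` at `X` and at `Y` propagates through any
formula context, so `Q` and `Q'` have the same reduct models at every SE-model of `P`.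
Whether `Y` is an answer set of `P ∪ Q ∪ R` only depends on the reduct models `X ⊆ Y` of
`(P ∪ Q ∪ R)^Y`, and each of them makes `(X, Y)` an SE-model of `P`.
-/

theorem sat_reduct_self (X : Set Lit) (H : Fml) : Sat X (Reduct X H) ↔ Sat X H := by
  induction H with
  | bot | top | lit => rfl
  | not H => by_cases h : Sat X H <;> simp [Reduct, Sat, h]
  | conj _ _ ih₁ ih₂ => exact and_congr ih₁ ih₂
  | disj _ _ ih₁ ih₂ => exact or_congr ih₁ ih₂

theorem satProg_reductProg_self (Y : Set Lit) (P : Prog) :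
    SatProg Y (ReductProg Y P) ↔ SatProg Y P := by
  simp only [SatProg, ReductProg, Set.forall_mem_image, SatRule, ReductRule, sat_reduct_self]

theorem satProg_reductProg_union (X Y : Set Lit) (A B : Prog) :
    SatProg X (ReductProg Y (A ∪ B)) ↔
      SatProg X (ReductProg Y A) ∧ SatProg X (ReductProg Y B) := by
  simp only [SatProg, ReductProg, Set.image_union, Set.mem_union, or_imp, forall_and]

theorem SEModel.diag {P : Prog} {X Y : Set Lit} (h : SEModel P X Y) : SEModel P Y Y :=
  ⟨h.2.1, h.2.1, subset_rfl, h.2.2.2.1, (satProg_reductProg_self Y P).2 h.2.2.2.1⟩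

section Replacement

variable {F G H H' : Fml} {X Y : Set Lit}

theorem Repl.sat_iff (hr : Repl F G H H') (hY : Sat Y F ↔ Sat Y G) : Sat Y H ↔ Sat Y H' := by
  induction hr with
  | refl => rfl
  | repl => exact hY
  | not _ ih => exact not_congr ih
  | conj _ _ ih₁ ih₂ => exact and_congr ih₁ ih₂
  | disj _ _ ih₁ ih₂ => exact or_congr ih₁ ih₂

theorem Repl.sat_reduct_iff (hr : Repl F G H H') (hY : Sat Y F ↔ Sat Y G)
    (hX : Sat X (Reduct Y F) ↔ Sat X (Reduct Y G)) :
    Sat X (Reduct Y H) ↔ Sat X (Reduct Y H') := by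
  induction hr with
  | refl => rfl
  | repl => exact hX
  | not hr => simp only [Reduct, hr.sat_iff hY]
  | conj _ _ ih₁ ih₂ => exact and_congr ih₁ ih₂
  | disj _ _ ih₁ ih₂ => exact or_congr ih₁ ih₂

theorem ReplProg.satProg_reductProg_iff {Q Q' : Prog} (hrep : ReplProg F G Q Q')
    (hY : Sat Y F ↔ Sat Y G) (hX : Sat X (Reduct Y F) ↔ Sat X (Reduct Y G)) :
    SatProg X (ReductProg Y Q) ↔ SatProg X (ReductProg Y Q') := by
  obtain ⟨f, rfl, hf⟩ := hrep
  simp only [SatProg, ReductProg, Set.image_image, Set.forall_mem_image]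
  exact forall₂_congr fun r hr =>
    imp_congr ((hf r hr).2.sat_reduct_iff hY hX) ((hf r hr).1.sat_reduct_iff hY hX)

end Replacement

theorem answerSet_congr {Y : Set Lit} {A B : Prog} (hY : Consistent Y)
    (h : ∀ Z, Consistent Z → Z ⊆ Y →
      (SatProg Z (ReductProg Y A) ↔ SatProg Z (ReductProg Y B))) :
    AnswerSet Y A ↔ AnswerSet Y B :=
  and_congr_right fun _ => and_congr (h Y hY subset_rfl)
    ⟨fun hmin Z hZ hZB hZY => hmin Z hZ ((h Z hZ hZY).2 hZB) hZY,
      fun hmin Z hZ hZA hZY => hmin Z hZ ((h Z hZ hZY).1 hZA) hZY⟩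

theorem strongEq_union_of_seModel_iff {P Q Q' : Prog}
    (h : ∀ X Y, SEModel P X Y → (SatProg X (ReductProg Y Q) ↔ SatProg X (ReductProg Y Q'))) :
    StrongEq (P ∪ Q) (P ∪ Q') := by
  intro R Y
  have transfer : ∀ {A B : Prog},
      (∀ X, SEModel P X Y → (SatProg X (ReductProg Y A) ↔ SatProg X (ReductProg Y B))) →
      AnswerSet Y (P ∪ A ∪ R) → AnswerSet Y (P ∪ B ∪ R) := by
    intro A B hAB hans
    have hYP : SatProg Y P := by
      have := hans.2.1
      rw [satProg_reductProg_union, satProg_reductProg_union] at this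
      exact (satProg_reductProg_self Y P).1 this.1.1
    refine (answerSet_congr hans.1 fun Z hZ hZY => ?_).1 hans
    simp only [satProg_reductProg_union, and_assoc]
    exact and_congr_right fun hZP =>
      and_congr_left' (hAB Z ⟨hZ, hans.1, hZY, hYP, hZP⟩)
  exact ⟨transfer fun X hXY => h X Y hXY, transfer fun X hXY => (h X Y hXY).symm⟩

/-- Replacement theorem: if F and G are equivalent relative to P and Q'
is obtained from Q by replacing (regular) occurrences of F by G, then P ∪ Q and P ∪ Q'
are strongly equivalent. -/
theorem stmt11 (P Q Q' : Prog) (F G : Fml)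
    (heq : ∀ X Y : Set Lit, SEModel P X Y → (Sat X (Reduct Y F) ↔ Sat X (Reduct Y G)))
    (hrep : ReplProg F G Q Q') :
    StrongEq (P ∪ Q) (P ∪ Q') := by
  refine strongEq_union_of_seModel_iff fun X Y hXY =>
    hrep.satProg_reductProg_iff ?_ (heq X Y hXY)
  simpa only [sat_reduct_self] using heq Y Y hXY.diag
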